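/- arXiv:1106.5912 — 2 statements merged into one kernel-verified Lean document; each statement's English description precedes it below -/
import Mathlib

section
/- Let σ be a one-parameter group of automorphisms of a C*-algebra A, β ≠ 0 a real number, and φ a state on A satisfying the KMS condition φ(ab) = φ(b σ_{iβ}(a)) for all a, b in a dense σ-invariant *-subalgebra of analytic elements. Then φ is σ-invariant: φ(σ_t(a)) = φ(a) for all a ∈ A and t ∈ ℝ. -/
/-!
For `b` in the analytic subalgebra, let `F b` be the entire extension of `t ↦ σ_t b`. Uniqueness of
entire extensions gives `F b (z + s) = σ_s (F b z)` for real `s`, so `‖F b z‖` depends only on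
`Im z`. Taking `1` as the second KMS argument gives `φ (F a (iβ)) = φ a`; applied to `a = σ_s b`
this makes `z ↦ φ (F b z)` periodic with period `iβ`. Together with the first observation, this
entire function is bounded by its supremum on the compact segment `i[0, |β|]`, hence constant by
Liouville, and `φ (σ_t b) = φ b`. Density of the subalgebra finishes the proof.
-/

open Filter Complex Set Bornology Topology Function
open scoped CStarAlgebra

theorem Differentiable.eq_of_forall_ofReal_eq {E : Type*} [NormedAddCommGroup E]
    [NormedSpace ℂ E] [CompleteSpace E] {f g : ℂ → E} (hf : Differentiable ℂ f)
    (hg : Differentiable ℂ g) (h : ∀ t : ℝ, f t = g t) : f = g := by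
  have hreal : Tendsto ((↑) : ℝ → ℂ) (𝓝[≠] 0) (𝓝[≠] 0) := by
    simpa using continuous_ofReal.continuousWithinAt.tendsto_nhdsWithin
      (x := (0 : ℝ)) (t := {0}ᶜ) fun t ht => by simpa using ht
  exact (analyticOnNhd_univ_iff_differentiable.2 hf).eq_of_frequently_eq
    (analyticOnNhd_univ_iff_differentiable.2 hg) (hreal.frequently (.of_forall h))

theorem Function.Periodic.isBounded_range_of_norm_le {E : Type*} [SeminormedAddCommGroup E]
    {g : ℂ → E} {β : ℝ} (hg : Periodic g (I * β)) (hβ : β ≠ 0) {k : ℝ → ℝ} (hk : Continuous k)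
    (hgk : ∀ z, ‖g z‖ ≤ k z.im) : IsBounded (range g) := by
  obtain ⟨C, hC⟩ :=
    (isCompact_Icc (a := 0) (b := |β|)).exists_bound_of_continuousOn hk.continuousOn
  refine isBounded_iff_forall_norm_le.2 ⟨C, ?_⟩
  rintro _ ⟨z, rfl⟩
  have hline : Periodic (fun y : ℝ => g (z.re + y * I)) β := fun y => by
    convert hg (z.re + y * I) using 2; push_cast; ring
  have hline_abs : Periodic (fun y : ℝ => g (z.re + y * I)) |β| := by
    rcases abs_choice β with h | h <;> rw [h]
    exacts [hline, hline.neg]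
  obtain ⟨y, hy, hzy⟩ := hline_abs.exists_mem_Ico₀ (abs_pos.2 hβ) z.im
  calc ‖g z‖ = ‖g (z.re + y * I)‖ := by
        rw [← re_add_im z] at hzy ⊢; simpa using congrArg norm hzy
    _ ≤ k y := by simpa using hgk (z.re + y * I)
    _ ≤ C := (le_abs_self _).trans (hC y (Ico_subset_Icc_self hy))

section EntireExtension

variable {E : Type*} [NormedAddCommGroup E] [NormedSpace ℂ E]

/-- For such `f`, `f (iβ)` is the paper's `σ_{iβ}(x)`. -/
def IsEntireExtension (σ : ℝ → E → E) (x : E) (f : ℂ → E) : Prop :=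
  Differentiable ℂ f ∧ ∀ t : ℝ, f t = σ t x

namespace IsEntireExtension

variable {σ : ℝ → E → E} {x : E} {f g : ℂ → E}

theorem unique [CompleteSpace E] (hf : IsEntireExtension σ x f)
    (hg : IsEntireExtension σ x g) : f = g :=
  hf.1.eq_of_forall_ofReal_eq hg.1 fun t => by rw [hf.2, hg.2]

theorem comp_add_ofReal (hσ : ∀ s t x, σ (s + t) x = σ s (σ t x)) (hf : IsEntireExtension σ x f)
    (s : ℝ) : IsEntireExtension σ (σ s x) (fun z => f (z + s)) :=
  ⟨hf.1.comp (differentiable_id.add_const _), fun t => by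
    simp only [← ofReal_add, hf.2, hσ]⟩

section ContinuousLinear

variable {𝓕 : Type*} [FunLike 𝓕 E E] [ContinuousLinearMapClass 𝓕 ℂ E E] {σ : ℝ → 𝓕}

theorem map (hσ : ∀ s t x, σ (s + t) x = σ s (σ t x))
    (hf : IsEntireExtension (fun t => σ t) x f) (s : ℝ) :
    IsEntireExtension (fun t => σ t) (σ s x) (fun z => σ s (f z)) :=
  ⟨(ContinuousLinearMap.mk (σ s : E →ₗ[ℂ] E) (map_continuous (σ s))).differentiable.comp hf.1,
    fun t => by simp only [hf.2, ← hσ, add_comm]⟩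

theorem apply_add_ofReal [CompleteSpace E] (hσ : ∀ s t x, σ (s + t) x = σ s (σ t x))
    (hf : IsEntireExtension (fun t => σ t) x f) (s : ℝ) (z : ℂ) : f (z + s) = σ s (f z) :=
  congrFun ((hf.comp_add_ofReal hσ s).unique (hf.map hσ s)) z

theorem apply_eq_apply_of_periodic [CompleteSpace E] (hσ : ∀ s t x, σ (s + t) x = σ s (σ t x))
    (hσn : ∀ t x, ‖σ t x‖ = ‖x‖) (hf : IsEntireExtension (fun t => σ t) x f) (φ : E →L[ℂ] ℂ)
    {β : ℝ} (hβ : β ≠ 0) (hper : Periodic (φ ∘ f) (I * β)) (z w : ℂ) : φ (f z) = φ (f w) := by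
  have hbound : ∀ z, ‖(φ ∘ f) z‖ ≤ ‖φ‖ * ‖f (z.im * I)‖ := fun z => by
    calc ‖φ (f z)‖ ≤ ‖φ‖ * ‖f z‖ := φ.le_opNorm _
      _ = ‖φ‖ * ‖f (z.im * I)‖ := by
        rw [← re_add_im z, add_comm, hf.apply_add_ofReal hσ, hσn]; simp
  have hk : Continuous fun y : ℝ => ‖φ‖ * ‖f (y * I)‖ := by
    have := hf.1.continuous; fun_prop
  exact (φ.differentiable.comp hf.1).apply_eq_apply_of_bounded
    (hper.isBounded_range_of_norm_le hβ hk hbound) z w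

end ContinuousLinear

end IsEntireExtension

theorem periodic_comp_of_forall_apply_eq [CompleteSpace E] {σ : ℝ → E → E}
    (hσ : ∀ s t x, σ (s + t) x = σ s (σ t x))
    {B : Set E} (hB : ∀ t : ℝ, ∀ b ∈ B, σ t b ∈ B) {F : E → ℂ → E}
    (hF : ∀ b ∈ B, IsEntireExtension σ b (F b)) (φ : E →L[ℂ] ℂ) {w : ℂ}
    (hφ : ∀ a ∈ B, φ (F a w) = φ a) {b : E} (hb : b ∈ B) : Periodic (φ ∘ F b) w := by
  have hshift (s : ℝ) : F (σ s b) = fun z => F b (z + s) :=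
    (hF _ (hB s b hb)).unique ((hF b hb).comp_add_ofReal hσ s)
  have hreal (s : ℝ) : φ (F b (s + w)) = φ (F b s) := by
    rw [add_comm, ← congrFun (hshift s) w, hφ _ (hB s b hb), (hF b hb).2]
  have hd : Differentiable ℂ (φ ∘ F b) := φ.differentiable.comp (hF b hb).1
  exact congrFun ((hd.comp (differentiable_id.add_const w)).eq_of_forall_ofReal_eq hd hreal)

end EntireExtension

theorem kms_state_is_invariant_general
    (A : Type*) [NormedRing A] [StarRing A] [CStarRing A] [CompleteSpace A]
    [NormedAlgebra ℂ A] [StarModule ℂ A]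
    (σ : ℝ → A ≃⋆ₐ[ℂ] A)
    (hσ0 : σ 0 = StarAlgEquiv.refl ℂ A)
    (hσadd : ∀ s t : ℝ, ∀ x : A, σ (s + t) x = σ s (σ t x))
    (β : ℝ) (hβ : β ≠ 0)
    (φ : A →L[ℂ] ℂ)
    (B : StarSubalgebra ℂ A) (hdense : Dense (B : Set A))
    (hBinv : ∀ t : ℝ, ∀ b ∈ B, σ t b ∈ B)
    (F : A → ℂ → A)
    (hFanalytic : ∀ b ∈ B, Differentiable ℂ (F b))
    (hFext : ∀ b ∈ B, ∀ t : ℝ, F b (t : ℂ) = σ t b)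
    (hKMS : ∀ a ∈ B, ∀ b ∈ B, φ (a * b) = φ (b * F a (Complex.I * β))) :
    ∀ (x : A) (t : ℝ), φ (σ t x) = φ x := by
  let _ : CStarAlgebra A := {}
  have hext (b : A) (hb : b ∈ B) : IsEntireExtension (fun t => σ t) b (F b) :=
    ⟨hFanalytic b hb, hFext b hb⟩
  have hφ (a : A) (ha : a ∈ B) : φ (F a (I * β)) = φ a := by
    simpa using (hKMS a ha 1 (one_mem B)).symm
  have hinv (b : A) (hb : b ∈ B) (t : ℝ) : φ (σ t b) = φ b := by
    have hper := periodic_comp_of_forall_apply_eq hσadd hBinv hext φ hφ hb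
    have := (hext b hb).apply_eq_apply_of_periodic hσadd (fun t => StarAlgEquiv.norm_map (σ t))
      φ hβ hper t 0
    rwa [← ofReal_zero, hFext b hb, hFext b hb, hσ0] at this
  intro x t
  exact congrFun (Continuous.ext_on hdense (by fun_prop) φ.continuous fun b hb => hinv b hb t) x

/-- If `σ` is a strongly continuous one-parameter automorphism group of a
unital C*-algebra `A`, `β ≠ 0`, and a state `φ` satisfies the KMS condition
`φ(ab) = φ(b σ_{iβ}(a))` on a dense `σ`-invariant *-subalgebra `B` of analytic elements
(whose analytic extension is `F`), then `φ` is `σ`-invariant. -/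
theorem kms_state_is_invariant
    (A : Type*) [NormedRing A] [StarRing A] [CStarRing A] [CompleteSpace A]
    [NormedAlgebra ℂ A] [StarModule ℂ A]
    (σ : ℝ → A ≃⋆ₐ[ℂ] A)
    (hσ0 : σ 0 = StarAlgEquiv.refl ℂ A)
    (hσadd : ∀ s t : ℝ, ∀ x : A, σ (s + t) x = σ s (σ t x))
    (hσcont : ∀ x : A, Continuous fun t : ℝ => σ t x)
    (β : ℝ) (hβ : β ≠ 0)
    (φ : A →L[ℂ] ℂ)
    (hpos : ∀ x : A, 0 ≤ (φ (star x * x)).re ∧ (φ (star x * x)).im = 0)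
    (hone : φ 1 = 1)
    (B : StarSubalgebra ℂ A) (hdense : Dense (B : Set A))
    (hBinv : ∀ t : ℝ, ∀ b ∈ B, σ t b ∈ B)
    (F : A → ℂ → A)
    (hFanalytic : ∀ b ∈ B, Differentiable ℂ (F b))
    (hFext : ∀ b ∈ B, ∀ t : ℝ, F b (t : ℂ) = σ t b)
    (hKMS : ∀ a ∈ B, ∀ b ∈ B, φ (a * b) = φ (b * F a (Complex.I * β))) :
    ∀ (x : A) (t : ℝ), φ (σ t x) = φ x :=
  kms_state_is_invariant_general A σ hσ0 hσadd β hβ φ B hdense hBinv F hFanalytic hFext hKMS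
end

section
/- Let Γ be a countable discrete abelian group and H ⊆ Γ a subgroup. A probability measure λ on the Pontryagin dual Γ̂ satisfies ∫_{Γ̂} χ(g) dλ(χ) = 0 for all g ∈ Γ \ H if and only if λ is invariant under translation by every element of the annihilator H^⊥ = {ω ∈ Γ̂ : ω(h) = 1 for all h ∈ H}. -/
/-!
Translating `λ` by `ω` multiplies its Fourier coefficient at `g` by `ω g`. If the coefficients
vanish off `H`, translation by `ω ∈ H^⊥` therefore leaves all of them unchanged, and a finite
measure on the dual is determined by its Fourier coefficients: the dual of a countable discrete
group is compact metrizable, hence Polish, and the characters span a point-separating star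
subalgebra of its bounded continuous functions. Conversely, for `g ∉ H` the characters of the
discrete group `Γ ⧸ H` separate points (`ℚ/ℤ` is an injective abelian group), so some `ω ∈ H^⊥`
has `ω g ≠ 1`, and invariance under `ω` forces `λ̂ g = ω g · λ̂ g`, i.e. `λ̂ g = 0`.
-/

open MeasureTheory BoundedContinuousFunction

namespace MeasureTheory

theorem ext_of_forall_mem_submonoid_integral_eq_of_polish {E 𝕜 : Type*} [RCLike 𝕜]
    [TopologicalSpace E] [PolishSpace E] [MeasurableSpace E] [BorelSpace E]
    {P P' : Measure E} [IsFiniteMeasure P] [IsFiniteMeasure P'] {S : Submonoid (E →ᵇ 𝕜)}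
    (hstar : star (S : Set (E →ᵇ 𝕜)) ⊆ S) (hsep : ∀ x y : E, x ≠ y → ∃ f ∈ S, f x ≠ f y)
    (heq : ∀ f ∈ S, ∫ x, f x ∂P = ∫ x, f x ∂P') : P = P' := by
  set A := StarAlgebra.adjoin 𝕜 (S : Set (E →ᵇ 𝕜))
  have hA : ∀ f ∈ A, f ∈ Submodule.span 𝕜 (S : Set (E →ᵇ 𝕜)) := by
    have h := StarAlgebra.adjoin_eq_span (R := 𝕜) (S : Set (E →ᵇ 𝕜))
    rw [Set.union_eq_self_of_subset_right hstar, Submonoid.closure_eq] at h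
    exact fun f hf => h ▸ hf
  have hspan : ∀ f ∈ Submodule.span 𝕜 (S : Set (E →ᵇ 𝕜)), ∫ x, f x ∂P = ∫ x, f x ∂P' := by
    intro f hf
    induction hf using Submodule.span_induction with
    | mem f hf => exact heq f hf
    | zero => simp
    | add f g _ _ hf hg =>
      simp only [BoundedContinuousFunction.coe_add, Pi.add_apply]
      rw [integral_add (f.integrable P) (g.integrable P),
        integral_add (f.integrable P') (g.integrable P'), hf, hg]
    | smul c f _ hf => simp only [BoundedContinuousFunction.coe_smul, integral_smul, hf]
  refine ext_of_forall_mem_subalgebra_integral_eq_of_polish (A := A) ?_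
    fun f hf => hspan f (hA f hf)
  intro x y hxy
  obtain ⟨f, hfS, hf⟩ := hsep x y hxy
  exact ⟨_, ⟨_, ⟨f, StarAlgebra.subset_adjoin 𝕜 _ hfS, rfl⟩, rfl⟩, hf⟩

end MeasureTheory

noncomputable def AddCircle.ratToCircle : AddCircle (1 : ℚ) →+ Additive Circle :=
  QuotientAddGroup.lift _
    (Circle.expHom.comp ((AddMonoidHom.mulLeft (2 * Real.pi)).comp (Rat.castHom ℝ).toAddMonoidHom))
    (by
      rintro _ ⟨n, rfl⟩
      change Circle.exp (2 * Real.pi * ((n • (1 : ℚ) : ℚ) : ℝ)) = 1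
      rw [zsmul_one, Rat.cast_intCast, mul_comm]
      exact Circle.exp_int_mul_two_pi n)

theorem AddCircle.ratToCircle_injective : Function.Injective AddCircle.ratToCircle := by
  refine (injective_iff_map_eq_zero _).2 fun x hx => ?_
  induction x using QuotientAddGroup.induction_on with
  | H q =>
    obtain ⟨n, hn⟩ := Circle.exp_eq_one.1 (show Circle.exp (2 * Real.pi * q) = 1 from hx)
    have hq : (q : ℝ) = n := by
      have := Real.pi_pos
      nlinarith
    rw [QuotientAddGroup.eq_zero_iff]
    exact ⟨n, by simpa using (by exact_mod_cast hq : q = n).symm⟩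

theorem CommGroup.exists_monoidHom_circle_apply_ne_one {G : Type*} [CommGroup G] {g : G}
    (hg : g ≠ 1) : ∃ χ : G →* Circle, χ g ≠ 1 := by
  obtain ⟨c, hc⟩ :=
    CharacterModule.exists_character_apply_ne_zero_of_ne_zero (a := Additive.ofMul g) hg
  exact ⟨MonoidHom.toAdditive.symm (AddCircle.ratToCircle.comp c),
    fun h => hc (AddCircle.ratToCircle_injective (by rw [map_zero]; exact h))⟩

namespace PontryaginDual

section Monoid

variable {A : Type*} [Monoid A] [TopologicalSpace A]

theorem continuous_coe_apply (a : A) : Continuous fun χ : PontryaginDual A => (χ a : ℂ) :=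
  continuous_subtype_val.comp (continuous_eval_const (F := A →ₜ* Circle) a)

theorem integral_apply_map_mul_left [MeasurableSpace (PontryaginDual A)]
    [BorelSpace (PontryaginDual A)] (μ : Measure (PontryaginDual A)) (ω : PontryaginDual A)
    (a : A) : ∫ χ, (χ a : ℂ) ∂μ.map (ω * ·) = ω a * ∫ χ, (χ a : ℂ) ∂μ := by
  rw [integral_map (continuous_const_mul ω).measurable.aemeasurable
      (continuous_coe_apply a).aestronglyMeasurable,
    ← integral_const_mul]
  rfl

end Monoid

variable {A : Type*} [CommGroup A] [TopologicalSpace A] [DiscreteTopology A]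

theorem exists_apply_ne_one_of_notMem (H : Subgroup A) {g : A}
    (hg : g ∉ H) : ∃ ω : PontryaginDual A, (∀ h ∈ H, ω h = 1) ∧ ω g ≠ 1 := by
  obtain ⟨χ, hχ⟩ := CommGroup.exists_monoidHom_circle_apply_ne_one (g := (g : A ⧸ H))
    (by rwa [ne_eq, QuotientGroup.eq_one_iff])
  refine ⟨(⟨χ.comp (QuotientGroup.mk' H), continuous_of_discreteTopology⟩ : A →ₜ* Circle),
    fun h hh => ?_, hχ⟩
  change χ h = 1
  rw [(QuotientGroup.eq_one_iff h).2 hh]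
  exact _root_.map_one χ

noncomputable def evalHom : A →* (PontryaginDual A →ᵇ ℂ) where
  toFun a := .mkOfCompact ⟨fun χ => (χ a : ℂ), continuous_coe_apply a⟩
  map_one' := by ext χ; simp
  map_mul' a b := by ext χ; simp

@[simp]
theorem evalHom_apply (a : A) (χ : PontryaginDual A) : evalHom a χ = (χ a : ℂ) := rfl

theorem star_evalHom (a : A) : star (evalHom a) = evalHom a⁻¹ := by
  ext χ
  simp [Circle.coe_inv_eq_conj, -Circle.coe_inv]

instance [Countable A] : PolishSpace (PontryaginDual A) := by
  have : TopologicalSpace.PseudoMetrizableSpace (PontryaginDual A) :=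
    (ContinuousMonoidHom.isInducing_toContinuousMap A Circle).pseudoMetrizableSpace
  let := TopologicalSpace.pseudoMetrizableSpacePseudoMetric (PontryaginDual A)
  infer_instance

theorem measure_ext_of_integral_apply_eq [Countable A] [MeasurableSpace (PontryaginDual A)]
    [BorelSpace (PontryaginDual A)] {μ ν : Measure (PontryaginDual A)} [IsFiniteMeasure μ]
    [IsFiniteMeasure ν] (h : ∀ a : A, ∫ χ, (χ a : ℂ) ∂μ = ∫ χ, (χ a : ℂ) ∂ν) : μ = ν := by
  refine ext_of_forall_mem_submonoid_integral_eq_of_polish (S := MonoidHom.mrange evalHom)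
    ?_ ?_ ?_
  · rintro f ⟨a, ha⟩
    exact ⟨a⁻¹, by rw [← star_evalHom, ha, star_star]⟩
  · intro χ ψ hne
    obtain ⟨a, ha⟩ := DFunLike.ne_iff.1 hne
    exact ⟨_, ⟨a, rfl⟩, fun h => ha (Circle.coe_inj.1 h)⟩
  · rintro _ ⟨a, rfl⟩
    exact h a

end PontryaginDual

theorem fourier_vanishing_iff_annihilator_invariant_general
    (Γ : Type*) [CommGroup Γ] [Countable Γ] [TopologicalSpace Γ] [DiscreteTopology Γ]
    (H : Subgroup Γ)
    [MeasurableSpace (PontryaginDual Γ)] [BorelSpace (PontryaginDual Γ)]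
    (lam : Measure (PontryaginDual Γ)) [IsProbabilityMeasure lam] :
    (∀ g : Γ, g ∉ H → ∫ χ : PontryaginDual Γ, (χ g : ℂ) ∂lam = 0)
    ↔ ∀ ω : PontryaginDual Γ, (∀ h ∈ H, ω h = 1) →
        Measure.map (fun χ : PontryaginDual Γ => ω * χ) lam = lam := by
  constructor
  · intro hvanish ω hω
    refine PontryaginDual.measure_ext_of_integral_apply_eq fun g => ?_
    rw [PontryaginDual.integral_apply_map_mul_left]
    by_cases hg : g ∈ H
    · simp [hω g hg]
    · simp [hvanish g hg]
  · intro hinv g hg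
    obtain ⟨ω, hωH, hωg⟩ := PontryaginDual.exists_apply_ne_one_of_notMem H hg
    have h := PontryaginDual.integral_apply_map_mul_left lam ω g
    rw [hinv ω hωH, eq_comm, mul_left_eq_self₀] at h
    exact h.resolve_left (by rwa [Circle.coe_eq_one])

/-- For a countable discrete abelian group `Γ`, a subgroup `H`, and a
probability measure `λ` on the Pontryagin dual `Γ̂`, the Fourier coefficients of `λ`
vanish off `H` if and only if `λ` is invariant under translation by every character in
the annihilator `H^⊥ = {ω : ω|_H = 1}`. -/
theorem fourier_vanishing_iff_annihilator_invariant
    (Γ : Type*) [CommGroup Γ] [Countable Γ] [TopologicalSpace Γ] [DiscreteTopology Γ]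
    [IsTopologicalGroup Γ]
    (H : Subgroup Γ)
    [MeasurableSpace (PontryaginDual Γ)] [BorelSpace (PontryaginDual Γ)]
    (lam : Measure (PontryaginDual Γ)) [IsProbabilityMeasure lam] :
    (∀ g : Γ, g ∉ H → ∫ χ : PontryaginDual Γ, (χ g : ℂ) ∂lam = 0)
    ↔ ∀ ω : PontryaginDual Γ, (∀ h ∈ H, ω h = 1) →
        Measure.map (fun χ : PontryaginDual Γ => ω * χ) lam = lam :=
  fourier_vanishing_iff_annihilator_invariant_general Γ H lam
end
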